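/- arXiv:2106.09941 — 5 statements merged into one kernel-verified Lean document; each statement's English description precedes it below -/
import Mathlib

section
/- For every n ≥ 1, S_η(T(n) − 1) ≤ m(n − T(n)), where m(k) = −min_{j ≤ k} S_ξ(j). That is, the sum of the first T(n)−1 upward penalization jumps never exceeds the (sign-flipped) running minimum of the driving walk evaluated at n − T(n). -/
open Filter MeasureTheory ProbabilityTheory

noncomputable section

/-- Partial sum `a 0 + ⋯ + a (k-1)` (so `a i` plays the role of the `(i+1)`-st increment). -/
def pSum (a : ℕ → ℝ) (k : ℕ) : ℝ := ∑ i ∈ Finset.range k, a i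

/-- The counter `T(n) = #{k < n : S̃(k) ≤ 0}` of the penalised walk, defined recursively. -/
def Tcnt (ξ η : ℕ → ℝ) : ℕ → ℕ
  | 0 => 0
  | n + 1 =>
      Tcnt ξ η n + (if pSum ξ (n - Tcnt ξ η n) + pSum η (Tcnt ξ η n) ≤ 0 then 1 else 0)

/-- The penalised walk `S̃(n) = S_ξ(n − T(n)) + S_η(T(n))`. -/
def Stil (ξ η : ℕ → ℝ) (n : ℕ) : ℝ :=
  pSum ξ (n - Tcnt ξ η n) + pSum η (Tcnt ξ η n)

/-- Running minimum `min_{0 ≤ j ≤ k} S_ξ(j)`. -/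
def runMin (ξ : ℕ → ℝ) (k : ℕ) : ℝ :=
  (Finset.range (k + 1)).inf' (Finset.nonempty_range_iff.mpr (Nat.succ_ne_zero k)) (pSum ξ)

/-- `max_{1 ≤ i ≤ m} |a_i|` (equal to `0` if `m = 0`). -/
def maxAbs (a : ℕ → ℝ) (m : ℕ) : ℝ := ⨆ i ∈ Finset.range m, |a i|

/-- First passage time `N_η(x) = inf{k ≥ 1 : S_η(k) > x}`. -/
def Nhit (η : ℕ → ℝ) (x : ℝ) : ℕ := sInf {k : ℕ | x < pSum η k}

end

/-- Left inequality of Lemma 2.1: `S_η(T(n) − 1) ≤ m(n − T(n))` where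
`m(k) = −min_{j ≤ k} S_ξ(j)`. -/
theorem stmt0 (ξ η : ℕ → ℝ) (hη : ∀ i, 0 < η i) :
    ∀ n : ℕ, 1 ≤ n →
      pSum η (Tcnt ξ η n - 1) ≤ - runMin ξ (n - Tcnt ξ η n) := by
  have hTle : ∀ n, Tcnt ξ η n ≤ n := by
    intro n
    induction n with
    | zero => simp [Tcnt]
    | succ n ih => simp only [Tcnt]; split <;> omega
  intro n hn
  induction n with
  | zero => omega
  | succ n ih =>
    rcases Nat.eq_zero_or_pos n with h0 | h1
    · subst h0
      simp [Tcnt, pSum, runMin]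
    · have hT := hTle n
      have ihn := ih h1
      by_cases hc : pSum ξ (n - Tcnt ξ η n) + pSum η (Tcnt ξ η n) ≤ 0
      · have hTs : Tcnt ξ η (n + 1) = Tcnt ξ η n + 1 := by simp [Tcnt, hc]
        rw [hTs]
        have hsub : n + 1 - (Tcnt ξ η n + 1) = n - Tcnt ξ η n := by omega
        rw [hsub]
        simp only [Nat.add_sub_cancel]
        have hmin : runMin ξ (n - Tcnt ξ η n) ≤ pSum ξ (n - Tcnt ξ η n) :=
          Finset.inf'_le _ (Finset.self_mem_range_succ _)
        linarith
      · have hTs : Tcnt ξ η (n + 1) = Tcnt ξ η n := by simp [Tcnt, hc]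
        rw [hTs]
        have hsub : n + 1 - Tcnt ξ η n = (n - Tcnt ξ η n) + 1 := by omega
        rw [hsub]
        have hmono : runMin ξ (n - Tcnt ξ η n + 1) ≤ runMin ξ (n - Tcnt ξ η n) := by
          apply Finset.le_inf'
          intro b hb
          exact Finset.inf'_le _ (Finset.mem_range.mpr (by
            have := Finset.mem_range.mp hb; omega))
        linarith
end

section
/- For every n ≥ 1, m(n − T(n)) < S_η(T(n)) + max_{i ≤ n} |ξ_i|, where m(k) = −min_{j ≤ k} S_ξ(j). That is, the running minimum of the driving walk up to time n − T(n) is strictly exceeded by the total upward penalization plus the largest single increment. -/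
open Filter MeasureTheory ProbabilityTheory

section auxx

variable {ξ η : ℕ → ℝ}

lemma Tcnt_le (ξ η : ℕ → ℝ) : ∀ n, Tcnt ξ η n ≤ n := by
  intro n
  induction n with
  | zero => simp [Tcnt]
  | succ n ih => simp only [Tcnt]; split <;> omega

lemma Tcnt_le_succ (ξ η : ℕ → ℝ) (n : ℕ) : Tcnt ξ η n ≤ Tcnt ξ η (n + 1) := by
  simp only [Tcnt]; split <;> omega

lemma Tcnt_mono (ξ η : ℕ → ℝ) {n m : ℕ} (h : n ≤ m) : Tcnt ξ η n ≤ Tcnt ξ η m := by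
  induction m with
  | zero => simp [Nat.le_zero.mp h]
  | succ m ih =>
    rcases Nat.lt_succ_iff_lt_or_eq.mp (Nat.lt_succ_of_le h) with h' | h'
    · exact (ih (by omega)).trans (Tcnt_le_succ ξ η m)
    · exact h' ▸ le_refl _

lemma Tcnt_one (ξ η : ℕ → ℝ) : Tcnt ξ η 1 = 1 := by
  simp [Tcnt, pSum]

lemma pSum_eta_mono (hη : ∀ i, 0 < η i) {k l : ℕ} (h : k ≤ l) : pSum η k ≤ pSum η l := by
  unfold pSum
  exact Finset.sum_le_sum_of_subset_of_nonneg (Finset.range_subset_range.mpr h)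
    (fun i _ _ => (hη i).le)

lemma pSum_eta_pos (hη : ∀ i, 0 < η i) {k : ℕ} (h : 1 ≤ k) : 0 < pSum η k := by
  unfold pSum
  exact Finset.sum_pos (fun i _ => hη i) (Finset.nonempty_range_iff.mpr (by omega))

lemma maxAbs_nonneg (a : ℕ → ℝ) (m : ℕ) : 0 ≤ maxAbs a m := by
  unfold maxAbs
  refine Real.iSup_nonneg fun i => Real.iSup_nonneg fun _ => abs_nonneg _

lemma le_maxAbs (a : ℕ → ℝ) {i m : ℕ} (h : i < m) : |a i| ≤ maxAbs a m := by
  unfold maxAbs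
  have hb : BddAbove (Set.range fun i => ⨆ _ : i ∈ Finset.range m, |a i|) := by
    refine ⟨∑ j ∈ Finset.range m, |a j|, ?_⟩
    rintro x ⟨i, rfl⟩
    show (⨆ _ : i ∈ Finset.range m, |a i|) ≤ ∑ j ∈ Finset.range m, |a j|
    by_cases hi : i ∈ Finset.range m
    · rw [ciSup_pos (f := fun _ => |a i|) hi]
      exact Finset.single_le_sum (f := fun j => |a j|) (fun j _ => abs_nonneg _) hi
    · have : IsEmpty (i ∈ Finset.range m) := ⟨hi⟩
      rw [Real.iSup_of_isEmpty]
      exact Finset.sum_nonneg fun j _ => abs_nonneg _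
  calc |a i| = ⨆ _ : i ∈ Finset.range m, |a i| :=
        (ciSup_pos (f := fun _ => |a i|) (Finset.mem_range.mpr h)).symm
    _ ≤ ⨆ i, ⨆ _ : i ∈ Finset.range m, |a i| := le_ciSup hb i

/-- Key invariant: the penalised walk stays strictly above `-maxAbs ξ n`. -/
lemma Stil_gt (hη : ∀ i, 0 < η i) (n : ℕ) :
    ∀ k, 1 ≤ k → k ≤ n → -maxAbs ξ n < Stil ξ η k := by
  intro k
  induction k with
  | zero => omega
  | succ k ih =>
    intro _ hkn
    rcases Nat.eq_zero_or_pos k with hk | hk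
    · subst hk
      have h1 : Stil ξ η 1 = η 0 := by
        simp [Stil, Tcnt_one, pSum]
      rw [h1]
      have := maxAbs_nonneg ξ n
      have := hη 0
      linarith
    · have ih' := ih hk (by omega)
      by_cases hcond : pSum ξ (k - Tcnt ξ η k) + pSum η (Tcnt ξ η k) ≤ 0
      · have hT : Tcnt ξ η (k + 1) = Tcnt ξ η k + 1 := by
          simp [Tcnt, hcond]
        have hD : (k + 1) - Tcnt ξ η (k + 1) = k - Tcnt ξ η k := by
          have := Tcnt_le ξ η k; omega
        have hS : Stil ξ η (k + 1) = Stil ξ η k + η (Tcnt ξ η k) := by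
          unfold Stil
          rw [hD, hT]
          have : pSum η (Tcnt ξ η k + 1) = pSum η (Tcnt ξ η k) + η (Tcnt ξ η k) := by
            unfold pSum; rw [Finset.sum_range_succ]
          rw [this]; ring
        rw [hS]
        have := hη (Tcnt ξ η k)
        linarith
      · have hT : Tcnt ξ η (k + 1) = Tcnt ξ η k := by
          simp [Tcnt, hcond]
        have hD : (k + 1) - Tcnt ξ η (k + 1) = (k - Tcnt ξ η k) + 1 := by
          have := Tcnt_le ξ η k; omega
        have hS : Stil ξ η (k + 1) = Stil ξ η k + ξ (k - Tcnt ξ η k) := by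
          unfold Stil
          rw [hD, hT]
          have : pSum ξ ((k - Tcnt ξ η k) + 1)
              = pSum ξ (k - Tcnt ξ η k) + ξ (k - Tcnt ξ η k) := by
            unfold pSum; rw [Finset.sum_range_succ]
          rw [this]; ring
        rw [hS]
        have hpos : 0 < Stil ξ η k := lt_of_not_ge (by simpa [Stil] using hcond)
        have habs : |ξ (k - Tcnt ξ η k)| ≤ maxAbs ξ n :=
          le_maxAbs ξ (by have := Tcnt_le ξ η k; omega)
        have := neg_abs_le (ξ (k - Tcnt ξ η k))
        linarith

/-- Intermediate value property for `k ↦ k - Tcnt ξ η k`. -/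
lemma exists_hit (ξ η : ℕ → ℝ) :
    ∀ n j, j ≤ n - Tcnt ξ η n → ∃ k, k ≤ n ∧ k - Tcnt ξ η k = j := by
  intro n
  induction n with
  | zero => intro j hj; exact ⟨0, le_refl 0, by simp [Tcnt] at hj ⊢; omega⟩
  | succ n ih =>
    intro j hj
    by_cases hcond : pSum ξ (n - Tcnt ξ η n) + pSum η (Tcnt ξ η n) ≤ 0
    · have hT : Tcnt ξ η (n + 1) = Tcnt ξ η n + 1 := by simp [Tcnt, hcond]
      have hD : (n + 1) - Tcnt ξ η (n + 1) = n - Tcnt ξ η n := by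
        have := Tcnt_le ξ η n; omega
      obtain ⟨k, hk, hke⟩ := ih j (by omega)
      exact ⟨k, by omega, hke⟩
    · have hT : Tcnt ξ η (n + 1) = Tcnt ξ η n := by simp [Tcnt, hcond]
      have hD : (n + 1) - Tcnt ξ η (n + 1) = (n - Tcnt ξ η n) + 1 := by
        have := Tcnt_le ξ η n; omega
      rcases Nat.lt_or_ge j ((n - Tcnt ξ η n) + 1) with h' | h'
      · obtain ⟨k, hk, hke⟩ := ih j (by omega)
        exact ⟨k, by omega, hke⟩
      · exact ⟨n + 1, le_refl _, by omega⟩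

end auxx

/-- Right inequality of Lemma 2.1: `m(n − T(n)) < S_η(T(n)) + max_{i ≤ n} |ξ_i|`. -/
theorem stmt1 (ξ η : ℕ → ℝ) (hη : ∀ i, 0 < η i) :
    ∀ n : ℕ, 1 ≤ n →
      - runMin ξ (n - Tcnt ξ η n) < pSum η (Tcnt ξ η n) + maxAbs ξ n := by
  intro n hn
  have hT1 : 1 ≤ Tcnt ξ η n := by
    have := Tcnt_mono ξ η hn
    rw [Tcnt_one] at this
    omega
  have hSη : 0 < pSum η (Tcnt ξ η n) := pSum_eta_pos hη hT1
  have hM : 0 ≤ maxAbs ξ n := maxAbs_nonneg ξ n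
  rw [neg_lt, runMin]
  rw [Finset.lt_inf'_iff]
  intro j hj
  rw [Finset.mem_range] at hj
  rcases Nat.eq_zero_or_pos j with hj0 | hj1
  · subst hj0
    have : pSum ξ 0 = 0 := by simp [pSum]
    rw [this]
    linarith
  · obtain ⟨k, hkn, hke⟩ := exists_hit ξ η n j (by omega)
    have hk1 : 1 ≤ k := by omega
    have hkey := Stil_gt (ξ := ξ) hη n k hk1 hkn
    rw [Stil, hke] at hkey
    have hmono : pSum η (Tcnt ξ η k) ≤ pSum η (Tcnt ξ η n) :=
      pSum_eta_mono hη (Tcnt_mono ξ η hkn)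
    linarith
end

section
/- Deterministic version of Lemma 4.1: let j, l, a > 0 be reals with j + l < n. If min_{i ≤ j} S_ξ(i) ≤ −a and T(n) < l, then N_η(a) ≤ T(j + l), where N_η(x) = inf{k : S_η(k) > x}. In words: if the driving walk dips below −a within the first j steps and the total number of penalization jumps up to time n is less than l, then the η-walk must cross level a using at most T(j+l) jumps. -/
open Filter MeasureTheory ProbabilityTheory

lemma Tcnt_succ (ξ η : ℕ → ℝ) (k : ℕ) :
    Tcnt ξ η (k+1) = Tcnt ξ η k +
      (if pSum ξ (k - Tcnt ξ η k) + pSum η (Tcnt ξ η k) ≤ 0 then 1 else 0) := rfl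

lemma Tcnt_mono_s3 (ξ η : ℕ → ℝ) : Monotone (Tcnt ξ η) := by
  apply monotone_nat_of_le_succ
  intro k
  rw [Tcnt_succ]
  split <;> omega

lemma Tcnt_le_self (ξ η : ℕ → ℝ) : ∀ k, Tcnt ξ η k ≤ k := by
  intro k; induction k with
  | zero => simp [Tcnt]
  | succ k ih => rw [Tcnt_succ]; split <;> omega

lemma pSum_mono (η : ℕ → ℝ) (hη : ∀ i, 0 < η i) : Monotone (pSum η) := by
  intro m n hmn
  exact Finset.sum_le_sum_of_subset_of_nonneg (Finset.range_subset_range.mpr hmn)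
    (fun i _ _ => (hη i).le)

lemma ivt_nat (f : ℕ → ℕ) (h0 : f 0 = 0) (hstep : ∀ k, f (k+1) ≤ f k + 1) :
    ∀ M i, i ≤ f M → ∃ k ≤ M, f k = i := by
  intro M
  induction M with
  | zero => intro i hi; exact ⟨0, le_refl 0, by omega⟩
  | succ M ih =>
    intro i hi
    by_cases h : i ≤ f M
    · obtain ⟨k, hk, hfk⟩ := ih i h
      exact ⟨k, by omega, hfk⟩
    · exact ⟨M+1, le_refl _, by have := hstep M; omega⟩

lemma freeze (ξ η : ℕ → ℝ) (a : ℝ) (i₀ k₀ : ℕ)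
    (hξ : pSum ξ i₀ ≤ -a) (hk₀ : k₀ - Tcnt ξ η k₀ = i₀) :
    ∀ d, (∀ e < d, pSum η (Tcnt ξ η (k₀+e)) ≤ a) →
      Tcnt ξ η (k₀+d) = Tcnt ξ η k₀ + d := by
  intro d
  induction d with
  | zero => intro _; rfl
  | succ d ih =>
    intro h
    have hT := ih (fun e he => h e (by omega))
    have hle := Tcnt_le_self ξ η k₀
    have hidx : (k₀ + d) - Tcnt ξ η (k₀+d) = i₀ := by omega
    have hcond : pSum ξ ((k₀+d) - Tcnt ξ η (k₀+d)) + pSum η (Tcnt ξ η (k₀+d)) ≤ 0 := by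
      rw [hidx]
      have := h d (by omega)
      linarith
    have he : k₀ + (d+1) = (k₀ + d) + 1 := rfl
    rw [he, Tcnt_succ, if_pos hcond, hT]
    omega

/-- Deterministic version of Lemma 4.1: let `j, l, a > 0` with `j + l < n`.
If `min_{i ≤ j} S_ξ(i) ≤ −a` and `T(n) < l`, then `N_η(a) ≤ T(j + l)`. -/
theorem stmt3 (ξ η : ℕ → ℝ) (hη : ∀ i, 0 < η i) (j l a : ℝ) (n : ℕ)
    (hj : 0 < j) (hl : 0 < l) (ha : 0 < a) (hn : j + l < n)
    (hmin : runMin ξ ⌊j⌋₊ ≤ -a)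
    (hT : (Tcnt ξ η n : ℝ) < l) :
    Nhit η a ≤ Tcnt ξ η ⌊j + l⌋₊ := by
  classical
  set M := ⌊j + l⌋₊ with hMdef
  obtain ⟨i₀, hi₀mem, hi₀eq⟩ := Finset.exists_mem_eq_inf'
    (Finset.nonempty_range_iff.mpr (Nat.succ_ne_zero ⌊j⌋₊)) (pSum ξ)
  have hi₀le : i₀ ≤ ⌊j⌋₊ := by
    have := Finset.mem_range.mp hi₀mem; omega
  have hξi₀ : pSum ξ i₀ ≤ -a := by
    rw [← hi₀eq]; exact hmin
  have hMn : M < n := by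
    have h1 : (M : ℝ) ≤ j + l := Nat.floor_le (by positivity)
    have : (M : ℝ) < (n : ℝ) := lt_of_le_of_lt h1 hn
    exact_mod_cast this
  have hfloorj : (⌊j⌋₊ : ℝ) ≤ j := Nat.floor_le hj.le
  have hTMn : Tcnt ξ η M ≤ Tcnt ξ η n := Tcnt_mono_s3 ξ η hMn.le
  have hTMl : (Tcnt ξ η M : ℝ) < l := lt_of_le_of_lt (by exact_mod_cast hTMn) hT
  have hjTM : ⌊j⌋₊ + Tcnt ξ η M ≤ M := by
    apply Nat.le_floor
    push_cast
    linarith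
  have hstep : ∀ k, (k+1) - Tcnt ξ η (k+1) ≤ (k - Tcnt ξ η k) + 1 := by
    intro k
    have h1 : Tcnt ξ η k ≤ Tcnt ξ η (k+1) := Tcnt_mono_s3 ξ η (Nat.le_succ k)
    have h2 := Tcnt_le_self ξ η k
    omega
  obtain ⟨k₀, hk₀M, hk₀idx⟩ := ivt_nat (fun k => k - Tcnt ξ η k) (by simp [Tcnt]) hstep M i₀
    (show i₀ ≤ M - Tcnt ξ η M by have := Tcnt_le_self ξ η M; omega)
  have hk₀idx' : k₀ - Tcnt ξ η k₀ = i₀ := hk₀idx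
  have hi₀j : (i₀ : ℝ) ≤ j := le_trans (by exact_mod_cast hi₀le) hfloorj
  have hkey : a < pSum η (Tcnt ξ η M) := by
    by_cases hex : ∃ k ≤ n, a < pSum η (Tcnt ξ η k)
    · obtain ⟨k, hkn, hka⟩ := hex
      have hne : ∃ k, k ≤ n ∧ a < pSum η (Tcnt ξ η k) := ⟨k, hkn, hka⟩
      have hk'spec := Nat.find_spec hne
      have hk'min : ∀ m < Nat.find hne, ¬(m ≤ n ∧ a < pSum η (Tcnt ξ η m)) :=
        fun m hm => Nat.find_min hne hm
      set k' := Nat.find hne with hk'def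
      have hk'M : k' ≤ M := by
        by_cases hcase : k' ≤ k₀
        · omega
        · have hfr := freeze ξ η a i₀ k₀ hξi₀ hk₀idx' (k' - k₀)
            (fun e he => by
              have hlt : k₀ + e < k' := by omega
              have hnot := hk'min (k₀ + e) hlt
              have hle : k₀ + e ≤ n := by omega
              by_contra hc
              exact hnot ⟨hle, lt_of_not_ge hc⟩)
          rw [show k₀ + (k' - k₀) = k' by omega] at hfr
          have hTk₀ := Tcnt_le_self ξ η k₀
          have hTk'n : Tcnt ξ η k' ≤ Tcnt ξ η n := Tcnt_mono_s3 ξ η hk'spec.1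
          have hTk'l : (Tcnt ξ η k' : ℝ) < l := lt_of_le_of_lt (by exact_mod_cast hTk'n) hT
          have hk'eq : k' = i₀ + Tcnt ξ η k' := by omega
          have : (k' : ℝ) ≤ j + l := by
            rw [hk'eq]; push_cast; linarith
          exact Nat.le_floor this
      have hmono : pSum η (Tcnt ξ η k') ≤ pSum η (Tcnt ξ η M) :=
        pSum_mono η hη (Tcnt_mono_s3 ξ η hk'M)
      exact lt_of_lt_of_le hk'spec.2 hmono
    · exfalso
      push_neg at hex
      have hkn : k₀ ≤ n := le_trans hk₀M hMn.le
      have hfr := freeze ξ η a i₀ k₀ hξi₀ hk₀idx' (n - k₀)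
        (fun e he => hex (k₀ + e) (by omega))
      rw [show k₀ + (n - k₀) = n by omega] at hfr
      have hTk₀ := Tcnt_le_self ξ η k₀
      have hneq : n = i₀ + Tcnt ξ η n := by omega
      have : (n : ℝ) < j + l := by
        rw [hneq]; push_cast; linarith
      linarith
  exact Nat.sInf_le hkey
end

section
/- Suppose (a_n) and (b_n) are sequences of positive reals and (W_t)_{t∈[0,1]} a continuous function such that (1/√n) S_η(T(nt) − 1) ≤ −min_{s≤t} W(s) + ε for all t ∈ [0,1] and n large (for each ε > 0), and S_η(k)/k → μ ∈ (0, ∞] as k → ∞, and T(k) → ∞. Then limsup_{n→∞} T(nt)/√n ≤ (−min_{s≤t} W(s))/μ for each t ∈ (0,1], where the right-hand side is 0 when μ = ∞. -/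
open Filter MeasureTheory ProbabilityTheory

/-- Deterministic core of inequality (2.9): if
`S_η(T(nt)−1)/√n ≤ −min_{s≤t} W(s) + ε` eventually for each `ε > 0`,
`S_η(k)/k → μ ∈ (0,∞]` and `T(k) → ∞`, then for each `t ∈ (0,1]`,
`limsup_n T(nt)/√n ≤ (−min_{s≤t} W(s))/μ` (the right-hand side being `0` if `μ = ∞`). -/
theorem stmt6 (η : ℕ → ℝ) (hη : ∀ i, 0 < η i)
    (T : ℕ → ℕ) (hmono : Monotone T)
    (hTinf : Filter.Tendsto T Filter.atTop Filter.atTop)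
    (W : ℝ → ℝ) (hW : ContinuousOn W (Set.Icc 0 1)) (hW0 : W 0 = 0)
    (μ : ENNReal) (hμ : 0 < μ)
    (hmean : Filter.Tendsto (fun k : ℕ => ENNReal.ofReal (pSum η k / k))
      Filter.atTop (nhds μ))
    (hub : ∀ ε : ℝ, 0 < ε → ∀ᶠ n : ℕ in Filter.atTop, ∀ t ∈ Set.Icc (0 : ℝ) 1,
      pSum η (T ⌊(n : ℝ) * t⌋₊ - 1) / Real.sqrt n ≤ -sInf (W '' Set.Icc 0 t) + ε) :
    ∀ t ∈ Set.Ioc (0 : ℝ) 1,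
      Filter.limsup
          (fun n : ℕ => ENNReal.ofReal ((T ⌊(n : ℝ) * t⌋₊ : ℝ) / Real.sqrt n))
          Filter.atTop
        ≤ ENNReal.ofReal (-sInf (W '' Set.Icc 0 t)) / μ := by
  intro t ht
  set M : ℝ := -sInf (W '' Set.Icc 0 t) with hMdef
  set L : ENNReal :=
    Filter.limsup (fun n : ℕ => ENNReal.ofReal ((T ⌊(n : ℝ) * t⌋₊ : ℝ) / Real.sqrt n))
      Filter.atTop with hLdef
  have hfl : Tendsto (fun n : ℕ => ⌊(n : ℝ) * t⌋₊) atTop atTop :=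
    tendsto_nat_floor_atTop.comp (tendsto_natCast_atTop_atTop.atTop_mul_const ht.1)
  have hTt : Tendsto (fun n : ℕ => T ⌊(n : ℝ) * t⌋₊) atTop atTop := hTinf.comp hfl
  have hsq : Tendsto (fun n : ℕ => Real.sqrt n) atTop atTop := by
    rw [Filter.tendsto_atTop]
    intro b
    filter_upwards [eventually_ge_atTop ⌈b ^ 2⌉₊] with n hn
    have hb2 : (b ^ 2 : ℝ) ≤ n := le_trans (Nat.le_ceil _) (by exact_mod_cast hn)
    calc b ≤ |b| := le_abs_self b
      _ = Real.sqrt (b ^ 2) := (Real.sqrt_sq_eq_abs b).symm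
      _ ≤ Real.sqrt n := Real.sqrt_le_sqrt hb2
  have key : ∀ m ε : ℝ, 0 < m → 0 < ε → ENNReal.ofReal m < μ →
      L ≤ ENNReal.ofReal ((M + ε) / m) := by
    intro m ε hm hε hmμ
    have h1 : ∀ᶠ k in atTop, ENNReal.ofReal m < ENNReal.ofReal (pSum η k / k) :=
      hmean.eventually (eventually_gt_nhds hmμ)
    have h2 : ∀ᶠ k : ℕ in atTop, m * k ≤ pSum η k := by
      filter_upwards [h1, eventually_ge_atTop 1] with k hk hk1
      have hk' : m < pSum η k / k := by
        by_contra h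
        exact absurd hk (not_lt.mpr (ENNReal.ofReal_le_ofReal (not_lt.mp h)))
      have hkpos : (0 : ℝ) < k := by exact_mod_cast hk1
      calc m * k ≤ (pSum η k / k) * k := by nlinarith
        _ = pSum η k := div_mul_cancel₀ _ hkpos.ne'
    obtain ⟨K0, hK0⟩ := Filter.eventually_atTop.mp h2
    have hev : ∀ᶠ n : ℕ in atTop,
        (T ⌊(n : ℝ) * t⌋₊ : ℝ) / Real.sqrt n ≤ (M + ε) / m := by
      filter_upwards [hub (ε / 2) (half_pos hε), hTt.eventually_ge_atTop (K0 + 1),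
        hsq.eventually_ge_atTop (2 * m / ε)] with n hubn hTn hsn
      set k := T ⌊(n : ℝ) * t⌋₊ with hk
      have hsnpos : 0 < Real.sqrt n := lt_of_lt_of_le (by positivity) hsn
      have h2m : 2 * m ≤ ε * Real.sqrt n := by
        have := (div_le_iff₀ hε).mp hsn
        linarith
      have hps : m * ((k - 1 : ℕ) : ℝ) ≤ pSum η (k - 1) := by
        have := hK0 (k - 1) (by omega)
        exact this
      have hb : pSum η (k - 1) ≤ (M + ε / 2) * Real.sqrt n := by
        have h := hubn t ⟨ht.1.le, ht.2⟩
        rw [div_le_iff₀ hsnpos] at h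
        exact h
      have hcast : ((k - 1 : ℕ) : ℝ) = (k : ℝ) - 1 := by
        have h1k : 1 ≤ k := by omega
        push_cast [Nat.cast_sub h1k]
        ring
      rw [div_le_div_iff₀ hsnpos hm]
      rw [hcast] at hps
      nlinarith [hps, hb, h2m]
    exact Filter.limsup_le_of_le (by isBoundedDefault)
      (hev.mono fun n hn => ENNReal.ofReal_le_ofReal hn)
  by_cases hμtop : μ = ⊤
  · have h0 : ENNReal.ofReal M / μ = 0 := by simp [hμtop]
    rw [h0]
    have htend : Tendsto (fun j : ℕ => ENNReal.ofReal ((M + 1) / ((j : ℝ) + 1))) atTop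
        (nhds 0) := by
      have hreal : Tendsto (fun j : ℕ => (M + 1) / ((j : ℝ) + 1)) atTop (nhds 0) :=
        Tendsto.div_atTop tendsto_const_nhds
          (tendsto_atTop_add_const_right _ 1 tendsto_natCast_atTop_atTop)
      have := (ENNReal.continuous_ofReal.tendsto 0).comp hreal
      simpa [Function.comp_def] using this
    exact ge_of_tendsto' htend fun j =>
      key ((j : ℝ) + 1) 1 (by positivity) one_pos (by simp [hμtop])
  · set μt := μ.toReal with hμt
    have hμtpos : 0 < μt := ENNReal.toReal_pos hμ.ne' hμtop
    have hlim : Tendsto (fun ε : ℝ => ENNReal.ofReal ((M + ε) / (μt - ε)))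
        (nhdsWithin 0 (Set.Ioi 0)) (nhds (ENNReal.ofReal (M / μt))) := by
      have hc : ContinuousAt (fun ε : ℝ => (M + ε) / (μt - ε)) 0 := by
        apply ContinuousAt.div
        · fun_prop
        · fun_prop
        · simpa using hμtpos.ne'
      have := (ENNReal.continuous_ofReal.continuousAt.comp (by simpa using hc)).tendsto
      simp only [Function.comp] at this ⊢
      have h0 : (M + 0) / (μt - 0) = M / μt := by ring_nf
      rw [h0] at this
      exact this.mono_left nhdsWithin_le_nhds
    have hbound : ∀ᶠ ε in nhdsWithin (0 : ℝ) (Set.Ioi 0),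
        L ≤ ENNReal.ofReal ((M + ε) / (μt - ε)) := by
      filter_upwards [Ioo_mem_nhdsGT_of_mem (Set.mem_Ico.mpr ⟨le_refl 0, hμtpos⟩)]
        with ε hε
      refine key (μt - ε) ε (by linarith [hε.2]) hε.1 ?_
      have : ENNReal.ofReal (μt - ε) < ENNReal.ofReal μt :=
        (ENNReal.ofReal_lt_ofReal_iff hμtpos).mpr (by linarith [hε.1])
      rwa [ENNReal.ofReal_toReal hμtop] at this
    have hL : L ≤ ENNReal.ofReal (M / μt) := ge_of_tendsto hlim hbound
    rwa [ENNReal.ofReal_div_of_pos hμtpos, ENNReal.ofReal_toReal hμtop] at hL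
end

section
/- Event inclusion (4.2): for any c, K, ε, t with 0 < ε < K, 0 < t ≤ 1, c > 0, the event {max_{i ≤ nt} S̃(i)/√n ≥ c} contains the intersection of the three events {min_{i≤n} S_ξ(i) ≥ −K√n}, {N_η(ε√n) ≤ T(nt)}, and {η_{N_η(ε√n)} > (K+c)√n}. -/
open Filter MeasureTheory ProbabilityTheory

/-- Event inclusion (4.2), pathwise form: if `min_{i ≤ n} S_ξ(i) ≥ −K√n`,
`N_η(ε√n) ≤ T(nt)` and `η_{N_η(ε√n)} > (K+c)√n`, then `max_{i ≤ nt} S̃(i)/√n ≥ c`. -/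
theorem stmt17 (ξ η : ℕ → ℝ) (hη : ∀ i, 0 < η i) (c K ε t : ℝ) (n : ℕ)
    (hε : 0 < ε) (hεK : ε < K) (ht : 0 < t) (ht1 : t ≤ 1) (hc : 0 < c)
    (hmin : ∀ i ≤ n, -K * Real.sqrt n ≤ pSum ξ i)
    (hN : Nhit η (ε * Real.sqrt n) ≤ Tcnt ξ η ⌊(n : ℝ) * t⌋₊)
    (hjump : (K + c) * Real.sqrt n < η (Nhit η (ε * Real.sqrt n) - 1)) :
    ∃ i ≤ ⌊(n : ℝ) * t⌋₊, c ≤ Stil ξ η i / Real.sqrt n := by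
  have hsq : (0:ℝ) ≤ Real.sqrt n := Real.sqrt_nonneg n
  set N := Nhit η (ε * Real.sqrt n) with hNdef
  have h0notin : 0 ∉ {k : ℕ | ε * Real.sqrt n < pSum η k} := by
    simp only [Set.mem_setOf_eq, pSum, Finset.range_zero, Finset.sum_empty]
    nlinarith
  -- N ≥ 1
  rcases Nat.eq_zero_or_pos N with hN0 | hN1
  · -- then the set is empty; contradiction with hjump
    exfalso
    have hempty : {k : ℕ | ε * Real.sqrt n < pSum η k} = ∅ := by
      rcases (Nat.sInf_eq_zero.mp hN0) with h | h
      · exact absurd h h0notin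
      · exact h
    have h1notin : (1:ℕ) ∉ {k : ℕ | ε * Real.sqrt n < pSum η k} := by
      rw [hempty]; exact Set.notMem_empty 1
    simp only [Set.mem_setOf_eq, not_lt, pSum, Finset.sum_range_one] at h1notin
    rw [hN0] at hjump
    simp only [Nat.zero_sub] at hjump
    nlinarith
  -- n ≥ 1
  have hnpos : 0 < n := by
    by_contra hn
    push_neg at hn
    interval_cases n
    simp only [Nat.cast_zero, zero_mul, Nat.floor_zero] at hN
    have : Tcnt ξ η 0 = 0 := rfl
    omega
  have hsqpos : 0 < Real.sqrt n := Real.sqrt_pos.mpr (by exact_mod_cast hnpos)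
  -- Tcnt basics
  have hTsucc : ∀ m, Tcnt ξ η (m+1) = Tcnt ξ η m +
      (if pSum ξ (m - Tcnt ξ η m) + pSum η (Tcnt ξ η m) ≤ 0 then 1 else 0) := fun m => rfl
  have hTle : ∀ m, Tcnt ξ η m ≤ m := by
    intro m
    induction m with
    | zero => exact le_refl 0
    | succ k ih =>
      rw [hTsucc k]
      split <;> omega
  -- first time m with Tcnt m ≥ N
  set A : Set ℕ := {j | N ≤ Tcnt ξ η j} with hAdef
  have hAne : A.Nonempty := ⟨⌊(n : ℝ) * t⌋₊, hN⟩
  have hmA : sInf A ∈ A := Nat.sInf_mem hAne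
  have hmle : sInf A ≤ ⌊(n : ℝ) * t⌋₊ := Nat.sInf_le hN
  have hm0 : sInf A ≠ 0 := by
    intro h
    rw [h] at hmA
    have : Tcnt ξ η 0 = 0 := rfl
    have : N ≤ Tcnt ξ η 0 := hmA
    omega
  obtain ⟨m', hmeq⟩ : ∃ m', sInf A = m' + 1 := ⟨sInf A - 1, by omega⟩
  rw [hmeq] at hmA hmle
  have hm'notin : m' ∉ A := Nat.notMem_of_lt_sInf (by omega)
  have hm'lt : Tcnt ξ η m' < N := by
    simpa [hAdef, not_le] using hm'notin
  have hTm : Tcnt ξ η (m' + 1) = N := by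
    have h1 := hTsucc m'
    have h2 : N ≤ Tcnt ξ η (m' + 1) := hmA
    split at h1 <;> omega
  -- bound m ≤ n
  have hmn : m' + 1 ≤ n := by
    calc m' + 1 ≤ ⌊(n : ℝ) * t⌋₊ := hmle
    _ ≤ ⌊(n : ℝ)⌋₊ := by
        apply Nat.floor_le_floor
        nlinarith [Nat.cast_nonneg (α := ℝ) n]
    _ = n := Nat.floor_natCast n
  -- the key bound
  refine ⟨m' + 1, hmle, ?_⟩
  rw [le_div_iff₀ hsqpos]
  have hξ : -K * Real.sqrt n ≤ pSum ξ (m' + 1 - N) := by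
    rw [← hTm]; exact hmin _ (by omega)
  have hηsplit : pSum η N = pSum η (N - 1) + η (N - 1) := by
    have : N = (N - 1) + 1 := by omega
    rw [this]
    simp [pSum, Finset.sum_range_succ]
  have hηnn : 0 ≤ pSum η (N - 1) :=
    Finset.sum_nonneg fun i _ => (hη i).le
  have : c * Real.sqrt n ≤ Stil ξ η (m' + 1) := by
    unfold Stil
    rw [hTm, hηsplit]
    nlinarith
  linarith
end
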